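/- arXiv:2604.22045 — 3 statements merged into one kernel-verified Lean document; each statement's English description precedes it below -/
import Mathlib

section
/- (Superadditivity, Axiom 4) For all subsets R, T of Fin n with R ∩ T = ∅, the IDG-Vis set attributions satisfy a(R ∪ T) ≥ a(R) + a(T). -/
open scoped RealInnerProductSpace
open MeasureTheory

/-- Direction vector `a_T`: coordinatewise `x_i - x'_i` on `T`, `0` elsewhere. -/
noncomputable def dirVec {n : ℕ} (x x' : EuclideanSpace ℝ (Fin n)) (T : Finset (Fin n)) :
    EuclideanSpace ℝ (Fin n) :=
  WithLp.toLp 2 (fun i => if i ∈ T then x i - x' i else 0)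

/-- Unit direction `â_T = a_T / ‖a_T‖` if `a_T ≠ 0`, else `0`. -/
noncomputable def unitDir {n : ℕ} (x x' : EuclideanSpace ℝ (Fin n)) (T : Finset (Fin n)) :
    EuclideanSpace ℝ (Fin n) :=
  letI := Classical.dec (dirVec x x' T = 0)
  if dirVec x x' T = 0 then 0 else ‖dirVec x x' T‖⁻¹ • dirVec x x' T

/-- Directional gradient `∇_T f(y) = |⟪∇f(y), â_T⟫|`. -/
noncomputable def dirGrad {n : ℕ} (f : EuclideanSpace ℝ (Fin n) → ℝ)
    (x x' : EuclideanSpace ℝ (Fin n)) (T : Finset (Fin n))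
    (y : EuclideanSpace ℝ (Fin n)) : ℝ :=
  |⟪gradient f y, unitDir x x' T⟫|

/-- IDG-Vis score: `∫₀¹ ∇_T f(x' + α (x - x')) dα`. -/
noncomputable def IDGVis {n : ℕ} (f : EuclideanSpace ℝ (Fin n) → ℝ)
    (x x' : EuclideanSpace ℝ (Fin n)) (T : Finset (Fin n)) : ℝ :=
  ∫ α in (0:ℝ)..1, dirGrad f x x' T (x' + α • (x - x'))

/-- Set attribution `a(I) = Σ_{T ⊆ I} IDGVis(T)`. -/
noncomputable def setAttr {n : ℕ} (f : EuclideanSpace ℝ (Fin n) → ℝ)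
    (x x' : EuclideanSpace ℝ (Fin n)) (I : Finset (Fin n)) : ℝ :=
  ∑ T ∈ I.powerset, IDGVis f x x' T

/-! Every IDG-Vis score is the integral of an absolute value, hence nonnegative, and the score of `∅`
vanishes because `â_∅ = 0`. The subsets of `R` and those of `T` are subsets of `R ∪ T` that share only `∅`,
so `a(R) + a(T)` is a subsum of `a(R ∪ T)` with nonnegative terms left out. -/

theorem Finset.sum_powerset_add_sum_powerset_le_of_disjoint {α M : Type*} [DecidableEq α]
    [AddCommMonoid M] [PartialOrder M] [IsOrderedAddMonoid M] {g : Finset α → M}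
    (hg_empty : g ∅ = 0) (hg_nonneg : ∀ u, 0 ≤ g u) {s t : Finset α} (hst : Disjoint s t) :
    ∑ u ∈ s.powerset, g u + ∑ u ∈ t.powerset, g u ≤ ∑ u ∈ (s ∪ t).powerset, g u := by
  have hinter : s.powerset ∩ t.powerset = {∅} := by
    ext u
    rw [Finset.mem_inter, Finset.mem_powerset, Finset.mem_powerset, ← Finset.subset_inter_iff,
      Finset.disjoint_iff_inter_eq_empty.mp hst, Finset.subset_empty, Finset.mem_singleton]
  calc ∑ u ∈ s.powerset, g u + ∑ u ∈ t.powerset, g u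
      = ∑ u ∈ s.powerset ∪ t.powerset, g u := by
        rw [← Finset.sum_union_inter, hinter, Finset.sum_singleton, hg_empty, add_zero]
    _ ≤ ∑ u ∈ (s ∪ t).powerset, g u :=
        Finset.sum_le_sum_of_subset_of_nonneg
          (Finset.union_subset (Finset.powerset_mono.mpr Finset.subset_union_left)
            (Finset.powerset_mono.mpr Finset.subset_union_right))
          fun u _ _ => hg_nonneg u

section IDGVis

variable {n : ℕ} (f : EuclideanSpace ℝ (Fin n) → ℝ) (x x' : EuclideanSpace ℝ (Fin n))

theorem unitDir_empty : unitDir x x' ∅ = 0 := by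
  have hdir : dirVec x x' ∅ = 0 := by
    ext i
    simp [dirVec]
  simp [unitDir, hdir]

theorem IDGVis_nonneg (T : Finset (Fin n)) : 0 ≤ IDGVis f x x' T :=
  intervalIntegral.integral_nonneg zero_le_one fun _ _ => abs_nonneg _

theorem IDGVis_empty : IDGVis f x x' ∅ = 0 := by
  simp [IDGVis, dirGrad, unitDir_empty]

end IDGVis

theorem idgvis_superadditive_general {n : ℕ} (f : EuclideanSpace ℝ (Fin n) → ℝ)
    (x x' : EuclideanSpace ℝ (Fin n))
    (R T : Finset (Fin n)) (hRT : R ∩ T = ∅) :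
    setAttr f x x' R + setAttr f x x' T ≤ setAttr f x x' (R ∪ T) :=
  Finset.sum_powerset_add_sum_powerset_le_of_disjoint (IDGVis_empty f x x')
    (IDGVis_nonneg f x x') (Finset.disjoint_iff_inter_eq_empty.mpr hRT)

/-- **Superadditivity (Axiom 4).** If `R ∩ T = ∅` then `a(R ∪ T) ≥ a(R) + a(T)`. -/
theorem idgvis_superadditive {n : ℕ} (hn : 1 ≤ n) (f : EuclideanSpace ℝ (Fin n) → ℝ)
    (hf : ContDiff ℝ 1 f) (x x' : EuclideanSpace ℝ (Fin n))
    (R T : Finset (Fin n)) (hRT : R ∩ T = ∅) :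
    setAttr f x x' R + setAttr f x x' T ≤ setAttr f x x' (R ∪ T) :=
  idgvis_superadditive_general f x x' R T hRT
end

section
/- (Completeness lower bound, Lemma 1) Let I₁, …, I_k ⊆ Fin n be pairwise disjoint subsets whose union contains every coordinate i with x_i ≠ x'_i. Then |f(x) − f(x')| ≤ Σ_{j=1}^{k} ‖a_{I_j}‖ · IDGVis(I_j). -/
open scoped RealInnerProductSpace
open MeasureTheory

/-!
Along the segment `γ α = x' + α (x - x')` the fundamental theorem of calculus gives
`f x - f x' = ∫₀¹ ⟪∇f (γ α), x - x'⟫ dα`. Disjointness and covering split `x - x'` as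
`Σ_j a_{I_j}` with `a_{I_j} = ‖a_{I_j}‖ • â_{I_j}`, and the triangle inequality, for the sum
and inside each integral, bounds the result by `Σ_j ‖a_{I_j}‖ · IDGVis(I_j)`.
-/

open scoped Gradient
open Function

section Segment

variable {E : Type*} [NormedAddCommGroup E] [InnerProductSpace ℝ E] [CompleteSpace E]
  {f : E → ℝ}

theorem ContDiff.continuous_gradient (hf : ContDiff ℝ 1 f) : Continuous (∇ f) :=
  (InnerProductSpace.toDual ℝ E).symm.continuous.comp (hf.continuous_fderiv one_ne_zero)

theorem ContDiff.continuous_inner_gradient_segment (hf : ContDiff ℝ 1 f) (x x' v : E) :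
    Continuous fun α : ℝ => ⟪∇ f (x' + α • (x - x')), v⟫ :=
  (hf.continuous_gradient.comp (by fun_prop)).inner continuous_const

theorem ContDiff.hasDerivAt_comp_segment (hf : ContDiff ℝ 1 f) (x x' : E) (α : ℝ) :
    HasDerivAt (fun t : ℝ => f (x' + t • (x - x'))) ⟪∇ f (x' + α • (x - x')), x - x'⟫ α := by
  have hγ : HasDerivAt (fun t : ℝ => x' + t • (x - x')) (x - x') α := by
    simpa using ((hasDerivAt_id α).smul_const (x - x')).const_add x'
  rw [inner_gradient_left]
  exact ((hf.differentiable one_ne_zero) _).hasFDerivAt.comp_hasDerivAt α hγ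

theorem ContDiff.sub_eq_integral_inner_gradient (hf : ContDiff ℝ 1 f) (x x' : E) :
    f x - f x' = ∫ α in (0 : ℝ)..1, ⟪∇ f (x' + α • (x - x')), x - x'⟫ := by
  rw [intervalIntegral.integral_eq_sub_of_hasDerivAt (fun α _ => hf.hasDerivAt_comp_segment x x' α)
    ((hf.continuous_inner_gradient_segment x x' _).intervalIntegrable 0 1)]
  simp

end Segment

section Directions

variable {n : ℕ} (x x' : EuclideanSpace ℝ (Fin n))

theorem sum_dirVec_eq_sub {ι : Type*} [Fintype ι] {I : ι → Finset (Fin n)}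
    (hdisj : Pairwise (Disjoint on I)) (hcover : ∀ i, x i ≠ x' i → ∃ j, i ∈ I j) :
    ∑ j, dirVec x x' (I j) = x - x' := by
  ext i
  simp only [WithLp.ofLp_sum, Finset.sum_apply, dirVec]
  by_cases hi : x i = x' i
  · simp [hi]
  obtain ⟨j, hj⟩ := hcover i hi
  rw [Fintype.sum_eq_single j fun j' hj' =>
    if_neg fun hj'' => Finset.disjoint_left.mp (hdisj hj') hj'' hj, if_pos hj]
  rfl

theorem norm_smul_unitDir (T : Finset (Fin n)) :
    ‖dirVec x x' T‖ • unitDir x x' T = dirVec x x' T := by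
  by_cases h : dirVec x x' T = 0
  · simp [unitDir, h]
  · rw [unitDir, if_neg h, smul_smul, mul_inv_cancel₀ (norm_ne_zero_iff.mpr h), one_smul]

theorem real_inner_dirVec (T : Finset (Fin n)) (v : EuclideanSpace ℝ (Fin n)) :
    ⟪v, dirVec x x' T⟫ = ‖dirVec x x' T‖ * ⟪v, unitDir x x' T⟫ := by
  rw [← real_inner_smul_right, norm_smul_unitDir]

theorem abs_integral_inner_dirVec_le (f : EuclideanSpace ℝ (Fin n) → ℝ) (T : Finset (Fin n)) :
    |∫ α in (0 : ℝ)..1, ⟪∇ f (x' + α • (x - x')), dirVec x x' T⟫| ≤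
      ‖dirVec x x' T‖ * IDGVis f x x' T := by
  simp_rw [real_inner_dirVec]
  rw [intervalIntegral.integral_const_mul, abs_mul, abs_norm]
  gcongr
  exact intervalIntegral.abs_integral_le_integral_abs zero_le_one

end Directions

theorem idgvis_completeness_bound_general {n : ℕ}
    (f : EuclideanSpace ℝ (Fin n) → ℝ) (hf : ContDiff ℝ 1 f)
    (x x' : EuclideanSpace ℝ (Fin n))
    (k : ℕ) (I : Fin k → Finset (Fin n))
    (hdisj : ∀ j j' : Fin k, j ≠ j' → Disjoint (I j) (I j'))
    (hcover : ∀ i : Fin n, x i ≠ x' i → ∃ j : Fin k, i ∈ I j) :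
    |f x - f x'| ≤ ∑ j : Fin k, ‖dirVec x x' (I j)‖ * IDGVis f x x' (I j) := by
  calc |f x - f x'|
      = |∑ j, ∫ α in (0 : ℝ)..1, ⟪∇ f (x' + α • (x - x')), dirVec x x' (I j)⟫| := by
        rw [hf.sub_eq_integral_inner_gradient, ← intervalIntegral.integral_finsetSum fun j _ =>
          (hf.continuous_inner_gradient_segment x x' _).intervalIntegrable 0 1]
        simp_rw [← inner_sum, sum_dirVec_eq_sub x x' hdisj hcover]
    _ ≤ ∑ j, |∫ α in (0 : ℝ)..1, ⟪∇ f (x' + α • (x - x')), dirVec x x' (I j)⟫| :=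
        Finset.abs_sum_le_sum_abs _ _
    _ ≤ ∑ j, ‖dirVec x x' (I j)‖ * IDGVis f x x' (I j) :=
        Finset.sum_le_sum fun j _ => abs_integral_inner_dirVec_le x x' f (I j)

/-- **Completeness lower bound (Lemma 1).**
If `I₁, …, I_k` are pairwise disjoint and their union contains every coordinate where
`x` and `x'` differ, then `|f(x) - f(x')| ≤ Σ_j ‖a_{I_j}‖ · IDGVis(I_j)`. -/
theorem idgvis_completeness_bound {n : ℕ} (hn : 1 ≤ n)
    (f : EuclideanSpace ℝ (Fin n) → ℝ) (hf : ContDiff ℝ 1 f)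
    (x x' : EuclideanSpace ℝ (Fin n))
    (k : ℕ) (I : Fin k → Finset (Fin n))
    (hdisj : ∀ j j' : Fin k, j ≠ j' → Disjoint (I j) (I j'))
    (hcover : ∀ i : Fin n, x i ≠ x' i → ∃ j : Fin k, i ∈ I j) :
    |f x - f x'| ≤ ∑ j : Fin k, ‖dirVec x x' (I j)‖ * IDGVis f x x' (I j) :=
  idgvis_completeness_bound_general f hf x x' k I hdisj hcover
end

section
/- (Sensitivity, Lemma 2) Suppose the input x and the baseline x' agree on every coordinate outside a subset I ⊆ Fin n (i.e., x_i = x'_i for all i ∉ I) and f(x) ≠ f(x'). Then the IDG-Vis set attribution satisfies a(I) > 0; in particular a(I) ≠ 0. -/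
open scoped RealInnerProductSpace
open MeasureTheory

/-!
Along the segment `α ↦ x' + α • (x - x')` the fundamental theorem of calculus gives
`f x - f x' = ∫₀¹ Df(x' + α (x - x')) (x - x') dα`. When `x` and `x'` agree outside `I`, the
direction `a_I` is `x - x'` itself, so `IDGVis(I)` is this integrand in absolute value, scaled by
`‖x - x'‖⁻¹`; hence `IDGVis(I) ≥ |f x - f x'| / ‖x - x'‖ > 0`. All other summands of `a(I)` are
integrals of absolute values, hence nonnegative.
-/

section Segment

variable {E : Type*} [NormedAddCommGroup E] [NormedSpace ℝ E]

theorem integral_fderiv_segment {f : E → ℝ} (hf : ContDiff ℝ 1 f) (x x' : E) :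
    ∫ α in (0 : ℝ)..1, fderiv ℝ f (x' + α • (x - x')) (x - x') = f x - f x' := by
  have hγ : ∀ α : ℝ, HasDerivAt (fun t : ℝ => x' + t • (x - x')) (x - x') α := fun α => by
    simpa using ((hasDerivAt_id α).smul_const (x - x')).const_add x'
  have hderiv : ∀ α : ℝ, HasDerivAt (fun t : ℝ => f (x' + t • (x - x')))
      (fderiv ℝ f (x' + α • (x - x')) (x - x')) α := fun α =>
    (hf.differentiable one_ne_zero _).hasFDerivAt.comp_hasDerivAt α (hγ α)
  have hcont : Continuous fun α : ℝ => fderiv ℝ f (x' + α • (x - x')) (x - x') := by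
    have := hf.continuous_fderiv one_ne_zero
    fun_prop
  rw [intervalIntegral.integral_eq_sub_of_hasDerivAt (fun α _ => hderiv α)
    (hcont.intervalIntegrable 0 1)]
  simp

theorem abs_sub_le_integral_abs_fderiv_segment {f : E → ℝ} (hf : ContDiff ℝ 1 f) (x x' : E) :
    |f x - f x'| ≤ ∫ α in (0 : ℝ)..1, |fderiv ℝ f (x' + α • (x - x')) (x - x')| := by
  rw [← integral_fderiv_segment hf x x']
  exact intervalIntegral.abs_integral_le_integral_abs zero_le_one

end Segment

section Attribution

variable {n : ℕ} (f : EuclideanSpace ℝ (Fin n) → ℝ) (x x' : EuclideanSpace ℝ (Fin n))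

theorem dirVec_eq_sub {T : Finset (Fin n)} (hagree : ∀ i, i ∉ T → x i = x' i) :
    dirVec x x' T = x - x' := by
  ext i
  by_cases hi : i ∈ T
  · simp [dirVec, hi]
  · simp [dirVec, hi, hagree i hi]

theorem unitDir_eq_inv_norm_smul (T : Finset (Fin n)) :
    unitDir x x' T = ‖dirVec x x' T‖⁻¹ • dirVec x x' T := by
  by_cases h : dirVec x x' T = 0 <;> simp [unitDir, h]

theorem dirGrad_eq (T : Finset (Fin n)) (y : EuclideanSpace ℝ (Fin n)) :
    dirGrad f x x' T y = ‖dirVec x x' T‖⁻¹ * |fderiv ℝ f y (dirVec x x' T)| := by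
  rw [dirGrad, unitDir_eq_inv_norm_smul, real_inner_smul_right, inner_gradient_left, abs_mul,
    abs_of_nonneg (inv_nonneg.mpr (norm_nonneg _))]

theorem IDGVis_pos {T : Finset (Fin n)} (hf : ContDiff ℝ 1 f)
    (hagree : ∀ i, i ∉ T → x i = x' i) (hne : f x ≠ f x') : 0 < IDGVis f x x' T := by
  have hsub : x - x' ≠ 0 := sub_ne_zero.mpr fun h => hne (h ▸ rfl)
  have hIDG : IDGVis f x x' T =
      ‖x - x'‖⁻¹ * ∫ α in (0 : ℝ)..1, |fderiv ℝ f (x' + α • (x - x')) (x - x')| := by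
    simp only [IDGVis, dirGrad_eq, dirVec_eq_sub x x' hagree, intervalIntegral.integral_const_mul]
  rw [hIDG]
  refine mul_pos (inv_pos.mpr (norm_pos_iff.mpr hsub)) ?_
  exact (abs_pos.mpr (sub_ne_zero.mpr hne)).trans_le
    (abs_sub_le_integral_abs_fderiv_segment hf x x')

theorem setAttr_pos {I : Finset (Fin n)} (hI : 0 < IDGVis f x x' I) : 0 < setAttr f x x' I :=
  Finset.sum_pos' (fun T _ => IDGVis_nonneg f x x' T) ⟨I, Finset.mem_powerset_self I, hI⟩

end Attribution

theorem idgvis_sensitivity_general {n : ℕ}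
    (f : EuclideanSpace ℝ (Fin n) → ℝ) (hf : ContDiff ℝ 1 f)
    (x x' : EuclideanSpace ℝ (Fin n)) (I : Finset (Fin n))
    (hagree : ∀ i : Fin n, i ∉ I → x i = x' i)
    (hne : f x ≠ f x') :
    0 < setAttr f x x' I ∧ setAttr f x x' I ≠ 0 := by
  have hpos := setAttr_pos f x x' (IDGVis_pos f x x' hf hagree hne)
  exact ⟨hpos, hpos.ne'⟩

/-- **Sensitivity (Lemma 2).** If `x` and `x'` agree outside `I` and `f(x) ≠ f(x')`,
then `a(I) > 0`; in particular `a(I) ≠ 0`. -/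
theorem idgvis_sensitivity {n : ℕ} (hn : 1 ≤ n)
    (f : EuclideanSpace ℝ (Fin n) → ℝ) (hf : ContDiff ℝ 1 f)
    (x x' : EuclideanSpace ℝ (Fin n)) (I : Finset (Fin n))
    (hagree : ∀ i : Fin n, i ∉ I → x i = x' i)
    (hne : f x ≠ f x') :
    0 < setAttr f x x' I ∧ setAttr f x x' I ≠ 0 :=
  idgvis_sensitivity_general f hf x x' I hagree hne
end
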